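/- The five logics CS4, IS4, S4I, GS4, GS4c are pairwise distinct, and the only inclusions among them are CS4 ⊊ IS4 ⊊ GS4 ⊊ GS4c and CS4 ⊊ S4I ⊊ GS4c. In particular: ¬◇⊥ ∉ CS4; (p→q) ∨ (q→p) ∉ IS4 and (p→q) ∨ (q→p) ∉ S4I; □(p∨q) → □p ∨ ◇q ∉ GS4; and (◇p→□q) → □(p→q) ∉ S4I. -/

import Mathlib

universe u

/-- Formulas of the intuitionistic modal language `L`, with a countably infinite
set of propositional variables indexed by `ℕ`. -/
inductive Fml : Type where
  | var : ℕ → Fml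
  | bot : Fml
  | and : Fml → Fml → Fml
  | or : Fml → Fml → Fml
  | imp : Fml → Fml → Fml
  | dia : Fml → Fml
  | box : Fml → Fml
  deriving DecidableEq

/-- A birelational structure: a set of worlds, a set of fallible worlds, an
intuitionistic relation `le` (`≼`), a modal relation `sq` (`⊑`) and a valuation. -/
structure KModel : Type (u + 1) where
  W : Type u
  fallible : Set W
  le : W → W → Prop
  sq : W → W → Prop
  val : ℕ → Set W

namespace KModel

/-- The satisfaction relation. -/
def Sat (M : KModel.{u}) : Fml → M.W → Prop
  | .var p, w => w ∈ M.val p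
  | .bot, w => w ∈ M.fallible
  | .and φ ψ, w => Sat M φ w ∧ Sat M ψ w
  | .or φ ψ, w => Sat M φ w ∨ Sat M ψ w
  | .imp φ ψ, w => ∀ v, M.le w v → Sat M φ v → Sat M ψ v
  | .dia φ, w => ∀ u, M.le w u → ∃ v, M.sq u v ∧ Sat M φ v
  | .box φ, w => ∀ u v, M.le w u → M.sq u v → Sat M φ v

/-- `M` is a bi-intuitionistic model: both relations are preorders, the set of
fallible worlds is closed under both relations, and the valuation is
`≼`-monotone and contains the fallible worlds. -/
def IsBiInt (M : KModel.{u}) : Prop :=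
  (∀ w, M.le w w) ∧ (∀ u v w, M.le u v → M.le v w → M.le u w) ∧
  (∀ w, M.sq w w) ∧ (∀ u v w, M.sq u v → M.sq v w → M.sq u w) ∧
  (∀ w v, w ∈ M.fallible → M.le w v → v ∈ M.fallible) ∧
  (∀ w v, w ∈ M.fallible → M.sq w v → v ∈ M.fallible) ∧
  (∀ p w v, w ∈ M.val p → M.le w v → v ∈ M.val p) ∧
  (∀ p w, w ∈ M.fallible → w ∈ M.val p)

/-- `⊑` is forth–up confluent for `≼`. -/
def ForthUp (M : KModel.{u}) : Prop :=
  ∀ w w' v, M.le w w' → M.sq w v → ∃ v', M.le v v' ∧ M.sq w' v'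

/-- `⊑` is back–up confluent for `≼`. -/
def BackUp (M : KModel.{u}) : Prop :=
  ∀ w v v', M.sq w v → M.le v v' → ∃ w', M.le w w' ∧ M.sq w' v'

/-- `⊑` is forth–down confluent for `≼`. -/
def ForthDown (M : KModel.{u}) : Prop :=
  ∀ w v v', M.le w v → M.sq v v' → ∃ w', M.sq w w' ∧ M.le w' v'

/-- `≼` is upward linear. -/
def UpLinear (M : KModel.{u}) : Prop :=
  ∀ w u v, M.le w u → M.le w v → M.le u v ∨ M.le v u

/-- There are no fallible worlds. -/
def Infallible (M : KModel.{u}) : Prop := M.fallible = ∅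

/-- CS4 frames: back–up confluent bi-intuitionistic frames. -/
def IsCS4 (M : KModel.{u}) : Prop := M.IsBiInt ∧ M.BackUp

/-- IS4 frames: forth–up confluent infallible CS4 frames. -/
def IsIS4 (M : KModel.{u}) : Prop := M.IsCS4 ∧ M.ForthUp ∧ M.Infallible

/-- GS4 frames: upward-linear IS4 frames. -/
def IsGS4 (M : KModel.{u}) : Prop := M.IsIS4 ∧ M.UpLinear

/-- GS4c frames: forth–down confluent GS4 frames. -/
def IsGS4c (M : KModel.{u}) : Prop := M.IsGS4 ∧ M.ForthDown

/-- S4I frames: forth–up and forth–down confluent infallible bi-intuitionistic frames. -/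
def IsS4I (M : KModel.{u}) : Prop :=
  M.IsBiInt ∧ M.ForthUp ∧ M.ForthDown ∧ M.Infallible

end KModel

/-- Hilbert-style derivability from intuitionistic propositional axiom schemes,
the S4 modal axiom schemes, an extra set `Ax` of axioms, modus ponens and
necessitation.  Since all axioms are given as schemes, the resulting set of
formulas is closed under substitution. -/
inductive Deriv (Ax : Fml → Prop) : Fml → Prop where
  | ax {φ} : Ax φ → Deriv Ax φ
  | then₁ (φ ψ : Fml) : Deriv Ax (φ.imp (ψ.imp φ))
  | then₂ (φ ψ χ : Fml) :
      Deriv Ax ((φ.imp (ψ.imp χ)).imp ((φ.imp ψ).imp (φ.imp χ)))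
  | andE₁ (φ ψ : Fml) : Deriv Ax ((φ.and ψ).imp φ)
  | andE₂ (φ ψ : Fml) : Deriv Ax ((φ.and ψ).imp ψ)
  | andI (φ ψ : Fml) : Deriv Ax (φ.imp (ψ.imp (φ.and ψ)))
  | orI₁ (φ ψ : Fml) : Deriv Ax (φ.imp (φ.or ψ))
  | orI₂ (φ ψ : Fml) : Deriv Ax (ψ.imp (φ.or ψ))
  | orE (φ ψ χ : Fml) :
      Deriv Ax ((φ.imp χ).imp ((ψ.imp χ).imp ((φ.or ψ).imp χ)))
  | exfalso (φ : Fml) : Deriv Ax (Fml.bot.imp φ)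
  | kBox (φ ψ : Fml) : Deriv Ax (((φ.imp ψ).box).imp ((φ.box).imp (ψ.box)))
  | kDia (φ ψ : Fml) : Deriv Ax (((φ.imp ψ).box).imp ((φ.dia).imp (ψ.dia)))
  | tBox (φ : Fml) : Deriv Ax ((φ.box).imp φ)
  | tDia (φ : Fml) : Deriv Ax (φ.imp (φ.dia))
  | fourBox (φ : Fml) : Deriv Ax ((φ.box).imp ((φ.box).box))
  | fourDia (φ : Fml) : Deriv Ax (((φ.dia).dia).imp (φ.dia))
  | mp {φ ψ} : Deriv Ax (φ.imp ψ) → Deriv Ax φ → Deriv Ax ψ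
  | nec {φ} : Deriv Ax φ → Deriv Ax (φ.box)

/-- The axiom scheme DP: `◇(p∨q) → ◇p ∨ ◇q`. -/
def AxDP (χ : Fml) : Prop :=
  ∃ φ ψ : Fml, χ = ((φ.or ψ).dia).imp ((φ.dia).or (ψ.dia))

/-- The axiom N: `¬◇⊥`, where `¬φ` abbreviates `φ → ⊥`. -/
def AxN (χ : Fml) : Prop := χ = (Fml.bot.dia).imp Fml.bot

/-- The axiom scheme FS2: `(◇p → □q) → □(p → q)`. -/
def AxFS2 (χ : Fml) : Prop :=
  ∃ φ ψ : Fml, χ = ((φ.dia).imp (ψ.box)).imp ((φ.imp ψ).box)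

/-- The axiom scheme CD: `□(p∨q) → □p ∨ ◇q`. -/
def AxCD (χ : Fml) : Prop :=
  ∃ φ ψ : Fml, χ = ((φ.or ψ).box).imp ((φ.box).or (ψ.dia))

/-- The axiom scheme GD: `(p→q) ∨ (q→p)`. -/
def AxGD (χ : Fml) : Prop :=
  ∃ φ ψ : Fml, χ = (φ.imp ψ).or (ψ.imp φ)

/-- The logic CS4. -/
def CS4 : Fml → Prop := Deriv (fun _ => False)

/-- The logic IS4 = CS4 + DP + N + FS2. -/
def IS4 : Fml → Prop := Deriv (fun χ => AxDP χ ∨ AxN χ ∨ AxFS2 χ)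

/-- The logic S4I = CS4 + DP + N + CD. -/
def S4I : Fml → Prop := Deriv (fun χ => AxDP χ ∨ AxN χ ∨ AxCD χ)

/-- The logic GS4 = IS4 + GD. -/
def GS4 : Fml → Prop := Deriv (fun χ => AxDP χ ∨ AxN χ ∨ AxFS2 χ ∨ AxGD χ)

/-- The logic GS4c = GS4 + CD. -/
def GS4c : Fml → Prop :=
  Deriv (fun χ => AxDP χ ∨ AxN χ ∨ AxFS2 χ ∨ AxGD χ ∨ AxCD χ)

/-!
The inclusions hold because the axiom sets grow. For the separations, each logic is sound for a
class of birelational models: CS4 for back–up confluent ones, IS4 for infallible forth–up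
confluent CS4 models, GS4 for upward-linear IS4 models, and S4I for infallible forth–up and
forth–down confluent models validating CD. Models on two or three worlds then refute N in CS4,
CD in GS4, FS2 in S4I, and GD in both IS4 and S4I, the last by the V-shaped intuitionistic frame
with trivial modal relation, on which CD holds because `⊑ ⊆ ≼`.
-/

namespace KModel

variable {M : KModel.{u}}

def Valid (M : KModel.{u}) (φ : Fml) : Prop := ∀ w, M.Sat φ w

namespace IsBiInt

theorem le_refl (hM : M.IsBiInt) (w : M.W) : M.le w w := hM.1 w

theorem le_trans (hM : M.IsBiInt) {u v w : M.W} : M.le u v → M.le v w → M.le u w :=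
  hM.2.1 u v w

theorem sq_refl (hM : M.IsBiInt) (w : M.W) : M.sq w w := hM.2.2.1 w

theorem sq_trans (hM : M.IsBiInt) {u v w : M.W} : M.sq u v → M.sq v w → M.sq u w :=
  hM.2.2.2.1 u v w

theorem sat_mono (hM : M.IsBiInt) {φ : Fml} {w v : M.W} (hwv : M.le w v)
    (hw : M.Sat φ w) : M.Sat φ v := by
  have ⟨_, _, _, _, hfle, _, hval, _⟩ := hM
  induction φ generalizing w v with
  | var p => exact hval p w v hw hwv
  | bot => exact hfle w v hw hwv
  | and φ ψ ihφ ihψ => exact ⟨ihφ hwv hw.1, ihψ hwv hw.2⟩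
  | or φ ψ ihφ ihψ => exact hw.imp (ihφ hwv) (ihψ hwv)
  | imp φ ψ => exact fun u hvu => hw u (hM.le_trans hwv hvu)
  | dia φ => exact fun u hvu => hw u (hM.le_trans hwv hvu)
  | box φ => exact fun u x hvu => hw u x (hM.le_trans hwv hvu)

theorem sat_of_fallible (hM : M.IsBiInt) {φ : Fml} {w : M.W} (hw : w ∈ M.fallible) :
    M.Sat φ w := by
  have ⟨_, _, _, _, hfle, hfsq, _, hfval⟩ := hM
  induction φ generalizing w with
  | var p => exact hfval p w hw
  | bot => exact hw
  | and φ ψ ihφ ihψ => exact ⟨ihφ hw, ihψ hw⟩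
  | or φ ψ ihφ => exact Or.inl (ihφ hw)
  | imp φ ψ _ ihψ => exact fun v hwv _ => ihψ (hfle w v hw hwv)
  | dia φ ih => exact fun u hwu => ⟨u, hM.sq_refl u, ih (hfle w u hw hwu)⟩
  | box φ ih => exact fun u v hwu huv => ih (hfsq u v (hfle w u hw hwu) huv)

end IsBiInt

/-- The frame condition validating `4□`: `≼ ; ⊑ ; ≼ ; ⊑  ⊆  ≼ ; ⊑ ; ≼`. -/
def BoxFour (M : KModel.{u}) : Prop :=
  ∀ w u v₁ u₂ v₂, M.le w u → M.sq u v₁ → M.le v₁ u₂ → M.sq u₂ v₂ →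
    ∃ x y, M.le w x ∧ M.sq x y ∧ M.le y v₂

theorem BackUp.boxFour (hM : M.IsBiInt) (hbu : M.BackUp) : M.BoxFour := by
  intro w u v₁ u₂ v₂ hwu huv₁ hv₁u₂ hu₂v₂
  obtain ⟨u', huu', hu'u₂⟩ := hbu u v₁ u₂ huv₁ hv₁u₂
  exact ⟨u', v₂, hM.le_trans hwu huu', hM.sq_trans hu'u₂ hu₂v₂, hM.le_refl v₂⟩

theorem ForthDown.boxFour (hM : M.IsBiInt) (hfd : M.ForthDown) : M.BoxFour := by
  intro w u v₁ u₂ v₂ hwu huv₁ hv₁u₂ hu₂v₂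
  obtain ⟨v', hv₁v', hv'v₂⟩ := hfd v₁ u₂ v₂ hv₁u₂ hu₂v₂
  exact ⟨u, v', hwu, hM.sq_trans huv₁ hv₁v', hv'v₂⟩

end KModel

open KModel

variable {M : KModel.{u}}

theorem Deriv.mono {Ax Ax' : Fml → Prop} (hAx : ∀ φ, Ax φ → Ax' φ) {φ : Fml}
    (hφ : Deriv Ax φ) : Deriv Ax' φ :=
  hφ.rec (fun h => .ax (hAx _ h)) .then₁ .then₂ .andE₁ .andE₂ .andI .orI₁ .orI₂ .orE .exfalso
    .kBox .kDia .tBox .tDia .fourBox .fourDia (fun _ _ => .mp) (fun _ => .nec)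

theorem Deriv.valid {Ax : Fml → Prop} (hM : M.IsBiInt) (h4 : M.BoxFour)
    (hAx : ∀ φ, Ax φ → M.Valid φ) {φ : Fml} (hφ : Deriv Ax φ) : M.Valid φ := by
  induction hφ with
  | ax hφ => exact hAx _ hφ
  | then₁ φ ψ => exact fun _ v _ hφ u hvu _ => hM.sat_mono hvu hφ
  | then₂ φ ψ χ =>
    exact fun _ a _ h₁ b hab h₂ c hbc h₃ =>
      h₁ c (hM.le_trans hab hbc) h₃ c (hM.le_refl c) (h₂ c hbc h₃)
  | andE₁ φ ψ => exact fun _ _ _ h => h.1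
  | andE₂ φ ψ => exact fun _ _ _ h => h.2
  | andI φ ψ => exact fun _ a _ h₁ b hab h₂ => ⟨hM.sat_mono hab h₁, h₂⟩
  | orI₁ φ ψ => exact fun _ _ _ h => Or.inl h
  | orI₂ φ ψ => exact fun _ _ _ h => Or.inr h
  | orE φ ψ χ =>
    exact fun _ a _ h₁ b hab h₂ c hbc h₃ =>
      h₃.elim (h₁ c (hM.le_trans hab hbc)) (h₂ c hbc)
  | exfalso φ => exact fun _ _ _ h => hM.sat_of_fallible h
  | kBox φ ψ =>
    exact fun _ a _ h₁ b hab h₂ u v hbu huv =>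
      h₁ u v (hM.le_trans hab hbu) huv v (hM.le_refl v) (h₂ u v hbu huv)
  | kDia φ ψ =>
    intro _ a _ h₁ b hab h₂ u hbu
    obtain ⟨v, huv, hv⟩ := h₂ u hbu
    exact ⟨v, huv, h₁ u v (hM.le_trans hab hbu) huv v (hM.le_refl v) hv⟩
  | tBox φ => exact fun _ a _ h => h a a (hM.le_refl a) (hM.sq_refl a)
  | tDia φ => exact fun _ a _ h u hau => ⟨u, hM.sq_refl u, hM.sat_mono hau h⟩
  | fourBox φ =>
    intro _ a _ h b c hab hbc d e hcd hde
    obtain ⟨x, y, hax, hxy, hye⟩ := h4 a b c d e hab hbc hcd hde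
    exact hM.sat_mono hye (h x y hax hxy)
  | fourDia φ =>
    intro _ a _ h u hau
    obtain ⟨v₁, huv₁, hv₁⟩ := h u hau
    obtain ⟨v₂, hv₁v₂, hv₂⟩ := hv₁ v₁ (hM.le_refl v₁)
    exact ⟨v₂, hM.sq_trans huv₁ hv₁v₂, hv₂⟩
  | mp _ _ ih₁ ih₂ => exact fun w => ih₁ w w (hM.le_refl w) (ih₂ w)
  | nec _ ih => exact fun _ _ v _ _ => ih v

section Axioms

variable {χ : Fml}

theorem AxDP.valid (hM : M.IsBiInt) (hfu : M.ForthUp) (hχ : AxDP χ) : M.Valid χ := by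
  obtain ⟨φ, ψ, rfl⟩ := hχ
  intro _ v _ h
  obtain ⟨x, hvx, hx⟩ := h v (hM.le_refl v)
  have hdia : ∀ {θ : Fml}, M.Sat θ x → M.Sat θ.dia v := fun hθ u hvu =>
    let ⟨x', hxx', hux'⟩ := hfu v u x hvu hvx
    ⟨x', hux', hM.sat_mono hxx' hθ⟩
  exact hx.imp hdia hdia

theorem AxN.valid (hM : M.IsBiInt) (hinf : M.Infallible) (hχ : AxN χ) : M.Valid χ := by
  subst hχ
  intro _ v _ h
  obtain ⟨x, -, hx⟩ := h v (hM.le_refl v)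
  exact (Set.eq_empty_iff_forall_notMem.1 hinf x hx).elim

theorem AxFS2.valid (hM : M.IsBiInt) (hfu : M.ForthUp) (hbu : M.BackUp) (hχ : AxFS2 χ) :
    M.Valid χ := by
  obtain ⟨φ, ψ, rfl⟩ := hχ
  intro _ a _ h u v hau huv v' hvv' hφ
  obtain ⟨u', huu', hu'v'⟩ := hbu u v v' huv hvv'
  have hdia : M.Sat φ.dia u' := fun u'' hu'u'' =>
    let ⟨x, hv'x, hu''x⟩ := hfu u' u'' v' hu'u'' hu'v'
    ⟨x, hu''x, hM.sat_mono hv'x hφ⟩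
  exact h u' (hM.le_trans hau huu') hdia u' v' (hM.le_refl u') hu'v'

theorem AxGD.valid (hM : M.IsBiInt) (hul : M.UpLinear) (hχ : AxGD χ) : M.Valid χ := by
  obtain ⟨φ, ψ, rfl⟩ := hχ
  intro w
  by_cases h : ∀ u, M.le w u → M.Sat φ u → M.Sat ψ u
  · exact Or.inl h
  push Not at h
  obtain ⟨u, hwu, hφu, hψu⟩ := h
  refine Or.inr fun v hwv hψv => ?_
  rcases hul w u v hwu hwv with huv | hvu
  · exact hM.sat_mono huv hφu
  · exact absurd (hM.sat_mono hvu hψv) hψu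

theorem AxCD.valid_of_sq_le (hM : M.IsBiInt) (hsq : ∀ w v, M.sq w v → M.le w v)
    (hχ : AxCD χ) : M.Valid χ := by
  obtain ⟨φ, ψ, rfl⟩ := hχ
  intro _ w _ h
  rcases h w w (hM.le_refl w) (hM.sq_refl w) with hφ | hψ
  · exact Or.inl fun u v hwu huv => hM.sat_mono (hM.le_trans hwu (hsq u v huv)) hφ
  · exact Or.inr fun u hwu => ⟨u, hM.sq_refl u, hM.sat_mono hwu hψ⟩

theorem AxCD.valid_of_upLinear (hM : M.IsBiInt) (hfu : M.ForthUp) (hfd : M.ForthDown)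
    (hul : M.UpLinear) (hχ : AxCD χ) : M.Valid χ := by
  obtain ⟨φ, ψ, rfl⟩ := hχ
  intro _ w _ h
  by_cases hφ : ∀ u v, M.le w u → M.sq u v → M.Sat φ v
  · exact Or.inl hφ
  push Not at hφ
  obtain ⟨u₁, v₁, hwu₁, hu₁v₁, hφv₁⟩ := hφ
  have hψv₁ : M.Sat ψ v₁ := (h u₁ v₁ hwu₁ hu₁v₁).resolve_left hφv₁
  refine Or.inr fun u₂ hwu₂ => ?_
  rcases hul w u₁ u₂ hwu₁ hwu₂ with hu₁u₂ | hu₂u₁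
  · obtain ⟨v, hv₁v, hu₂v⟩ := hfu u₁ u₂ v₁ hu₁u₂ hu₁v₁
    exact ⟨v, hu₂v, hM.sat_mono hv₁v hψv₁⟩
  · obtain ⟨v, hu₂v, hvv₁⟩ := hfd u₂ u₁ v₁ hu₂u₁ hu₁v₁
    refine ⟨v, hu₂v, (h u₂ v hwu₂ hu₂v).resolve_left fun hφv => ?_⟩
    exact hφv₁ (hM.sat_mono hvv₁ hφv)

end Axioms

section Soundness

variable {φ : Fml}

theorem CS4.valid (hφ : CS4 φ) (hM : M.IsCS4) : M.Valid φ :=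
  Deriv.valid hM.1 (hM.2.boxFour hM.1) (fun _ h => h.elim) hφ

theorem IS4.valid (hφ : IS4 φ) (hM : M.IsIS4) : M.Valid φ := by
  obtain ⟨⟨hbi, hbu⟩, hfu, hinf⟩ := hM
  refine Deriv.valid hbi (hbu.boxFour hbi) ?_ hφ
  rintro χ (hχ | hχ | hχ)
  exacts [hχ.valid hbi hfu, hχ.valid hbi hinf, hχ.valid hbi hfu hbu]

theorem GS4.valid (hφ : GS4 φ) (hM : M.IsGS4) : M.Valid φ := by
  obtain ⟨⟨⟨hbi, hbu⟩, hfu, hinf⟩, hul⟩ := hM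
  refine Deriv.valid hbi (hbu.boxFour hbi) ?_ hφ
  rintro χ (hχ | hχ | hχ | hχ)
  exacts [hχ.valid hbi hfu, hχ.valid hbi hinf, hχ.valid hbi hfu hbu, hχ.valid hbi hul]

theorem S4I.valid (hφ : S4I φ) (hM : M.IsS4I) (hCD : ∀ χ, AxCD χ → M.Valid χ) :
    M.Valid φ := by
  obtain ⟨hbi, hfu, hfd, hinf⟩ := hM
  refine Deriv.valid hbi (hfd.boxFour hbi) ?_ hφ
  rintro χ (hχ | hχ | hχ)
  exacts [hχ.valid hbi hfu, hχ.valid hbi hinf, hCD χ hχ]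

end Soundness

section Countermodels

abbrev nCountermodel : KModel where
  W := Fin 2
  fallible := {1}
  le := Eq
  sq a b := a = b ∨ b = 1
  val _ := {1}

theorem nCountermodel_isCS4 : nCountermodel.IsCS4 :=
  ⟨⟨by decide, by decide, by decide, by decide, by decide, by decide,
    fun _ _ _ hw hwv => hwv ▸ hw, fun _ _ => id⟩, by unfold BackUp; decide⟩

theorem not_CS4_axN : ¬ CS4 ((Fml.bot.dia).imp Fml.bot) := fun h =>
  absurd (h.valid nCountermodel_isCS4 0) (by simp only [Sat]; decide)

abbrev gdCountermodel : KModel where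
  W := Fin 3
  fallible := ∅
  le a b := a = b ∨ a = 0
  sq := Eq
  val n := {x | (n = 0 ∧ x = 1) ∨ (n = 1 ∧ x = 2)}

theorem gdCountermodel_isBiInt : gdCountermodel.IsBiInt :=
  ⟨by decide, by decide, by decide, by decide, by decide, by decide,
    by rintro (_ | _ | p) <;> first | decide | simp, fun _ _ h => h.elim⟩

theorem gdCountermodel_isIS4 : gdCountermodel.IsIS4 :=
  ⟨⟨gdCountermodel_isBiInt, by unfold BackUp; decide⟩, by unfold ForthUp; decide, rfl⟩

theorem gdCountermodel_isS4I : gdCountermodel.IsS4I :=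
  ⟨gdCountermodel_isBiInt, by unfold ForthUp; decide, by unfold ForthDown; decide, rfl⟩

theorem not_IS4_axGD :
    ¬ IS4 ((((Fml.var 0).imp (Fml.var 1)).or ((Fml.var 1).imp (Fml.var 0)))) := fun h =>
  absurd (h.valid gdCountermodel_isIS4 0) (by simp only [Sat]; decide)

theorem not_S4I_axGD :
    ¬ S4I ((((Fml.var 0).imp (Fml.var 1)).or ((Fml.var 1).imp (Fml.var 0)))) := fun h =>
  have hvalid := h.valid gdCountermodel_isS4I fun _ =>
    AxCD.valid_of_sq_le gdCountermodel_isBiInt fun _ _ => Or.inl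
  absurd (hvalid 0) (by simp only [Sat]; decide)

abbrev cdCountermodel : KModel where
  W := Fin 3
  fallible := ∅
  le a b := a = b ∨ (a = 0 ∧ b = 1)
  sq a b := a = b ∨ (a = 1 ∧ b = 2)
  val n := {x | (n = 0 ∧ (x = 0 ∨ x = 1)) ∨ (n = 1 ∧ x = 2)}

theorem cdCountermodel_isGS4 : cdCountermodel.IsGS4 := by
  refine ⟨⟨⟨⟨by decide, by decide, by decide, by decide, by decide, by decide,
    by rintro (_ | _ | p) <;> first | decide | simp, fun _ _ h => h.elim⟩, ?_⟩, ?_, rfl⟩, ?_⟩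
  · unfold BackUp; decide
  · unfold ForthUp; decide
  · unfold UpLinear; decide

theorem not_GS4_axCD :
    ¬ GS4 ((((Fml.var 0).or (Fml.var 1)).box).imp
      (((Fml.var 0).box).or ((Fml.var 1).dia))) := fun h => by
  have hpq : cdCountermodel.Sat (((Fml.var 0).or (Fml.var 1)).box) 0 := by
    simp only [Sat]; decide
  rcases h.valid cdCountermodel_isGS4 0 0 (Or.inl rfl) hpq with hp | hq
  · exact absurd hp (by simp only [Sat]; decide)
  · exact absurd hq (by simp only [Sat]; decide)

abbrev fs2Countermodel : KModel where
  W := Fin 3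
  fallible := ∅
  le a b := a = b ∨ (a = 1 ∧ b = 2)
  sq a b := a = b ∨ (a = 0 ∧ b = 1)
  val n := {x | n = 0 ∧ x = 2}

theorem fs2Countermodel_isS4I : fs2Countermodel.IsS4I := by
  refine ⟨⟨by decide, by decide, by decide, by decide, by decide, by decide,
    by rintro (_ | p) <;> first | decide | simp, fun _ _ h => h.elim⟩, ?_, ?_, rfl⟩
  · unfold ForthUp; decide
  · unfold ForthDown; decide

theorem fs2Countermodel_upLinear : fs2Countermodel.UpLinear := by
  unfold UpLinear; decide

theorem not_S4I_axFS2 :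
    ¬ S4I ((((Fml.var 0).dia).imp ((Fml.var 1).box)).imp
      (((Fml.var 0).imp (Fml.var 1)).box)) := fun h => by
  obtain ⟨hbi, hfu, hfd, -⟩ := fs2Countermodel_isS4I
  have hvalid := h.valid fs2Countermodel_isS4I fun _ =>
    AxCD.valid_of_upLinear hbi hfu hfd fs2Countermodel_upLinear
  have hpq : fs2Countermodel.Sat (((Fml.var 0).dia).imp ((Fml.var 1).box)) 0 := by
    simp only [Sat]; decide
  exact absurd (hvalid 0 0 (Or.inl rfl) hpq) (by simp only [Sat]; decide)

end Countermodels

/-- **The five logics are pairwise distinct, with exactly the expected inclusions.**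
The only inclusions among CS4, IS4, S4I, GS4, GS4c are
`CS4 ⊊ IS4 ⊊ GS4 ⊊ GS4c` and `CS4 ⊊ S4I ⊊ GS4c`.  In particular `¬◇⊥ ∉ CS4`,
`(p→q)∨(q→p) ∉ IS4`, `(p→q)∨(q→p) ∉ S4I`, `□(p∨q)→□p∨◇q ∉ GS4` and
`(◇p→□q)→□(p→q) ∉ S4I`. -/
theorem logics_pairwise_distinct :
    (∀ φ, CS4 φ → IS4 φ) ∧ (∀ φ, IS4 φ → GS4 φ) ∧ (∀ φ, GS4 φ → GS4c φ) ∧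
    (∀ φ, CS4 φ → S4I φ) ∧ (∀ φ, S4I φ → GS4c φ) ∧
    ¬ (∀ φ, IS4 φ → CS4 φ) ∧ ¬ (∀ φ, GS4 φ → IS4 φ) ∧ ¬ (∀ φ, GS4c φ → GS4 φ) ∧
    ¬ (∀ φ, S4I φ → CS4 φ) ∧ ¬ (∀ φ, GS4c φ → S4I φ) ∧
    ¬ (∀ φ, IS4 φ → S4I φ) ∧ ¬ (∀ φ, S4I φ → IS4 φ) ∧
    ¬ (∀ φ, GS4 φ → S4I φ) ∧ ¬ (∀ φ, S4I φ → GS4 φ) ∧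
    ¬ CS4 ((Fml.bot.dia).imp Fml.bot) ∧
    ¬ IS4 ((((Fml.var 0).imp (Fml.var 1)).or ((Fml.var 1).imp (Fml.var 0)))) ∧
    ¬ S4I ((((Fml.var 0).imp (Fml.var 1)).or ((Fml.var 1).imp (Fml.var 0)))) ∧
    ¬ GS4 ((((Fml.var 0).or (Fml.var 1)).box).imp
      (((Fml.var 0).box).or ((Fml.var 1).dia))) ∧
    ¬ S4I ((((Fml.var 0).dia).imp ((Fml.var 1).box)).imp
      (((Fml.var 0).imp (Fml.var 1)).box)) := by
  have IS4_le_GS4 : ∀ φ, IS4 φ → GS4 φ := fun _ => Deriv.mono fun _ => by tauto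
  refine ⟨fun _ => Deriv.mono fun _ => by tauto, IS4_le_GS4,
    fun _ => Deriv.mono fun _ => by tauto, fun _ => Deriv.mono fun _ => by tauto,
    fun _ => Deriv.mono fun _ => by tauto,
    fun h => not_CS4_axN (h _ (.ax (by simp [AxN]))),
    fun h => not_IS4_axGD (h _ (.ax (by simp [AxGD]))),
    fun h => not_GS4_axCD (h _ (.ax (by simp [AxCD]))),
    fun h => not_CS4_axN (h _ (.ax (by simp [AxN]))),
    fun h => not_S4I_axGD (h _ (.ax (by simp [AxGD]))),
    fun h => not_S4I_axFS2 (h _ (.ax (by simp [AxFS2]))),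
    fun h => not_GS4_axCD (IS4_le_GS4 _ (h _ (.ax (by simp [AxCD])))),
    fun h => not_S4I_axFS2 (h _ (.ax (by simp [AxFS2]))),
    fun h => not_GS4_axCD (h _ (.ax (by simp [AxCD]))),
    not_CS4_axN, not_IS4_axGD, not_S4I_axGD, not_GS4_axCD, not_S4I_axFS2⟩
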